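/- Let ξ = (cos θ, sin θ) and η = (−sin θ, cos θ), and for m = (m⊥, m₃) ∈ ℝ² × ℝ define Σ_{ξη}(m) = (m₃ m_ξ − m_ξ m_η²/2 − m_ξ³/6) ξ + (−m₃ m_η + m_η m_ξ²/2 + m_η³/6) η + (−m_ξ²/2 + m_η²/2) ẑ, where m_ξ = m⊥·ξ and m_η = m⊥·η. Then Σ_{ξη}(m) = cos(2θ) Σ_{e₁e₂}(m) + sin(2θ) Σ_{ε₁ε₂}(m), where {e₁,e₂} is the standard basis of ℝ² and ε₁ = (1/√2, 1/√2), ε₂ = (−1/√2, 1/√2). -/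
import Mathlib


noncomputable section

/-- The rotated entropy Σ_{ξη}(m), where ξ, η are planar vectors (identified with vectors of
ℝ³ with vanishing third component) and m = (m₁, m₂, m₃) ∈ ℝ³. -/
def SigmaRot (ξ η : ℝ × ℝ) (m : ℝ × ℝ × ℝ) : ℝ × ℝ × ℝ :=
  let mξ := m.1 * ξ.1 + m.2.1 * ξ.2
  let mη := m.1 * η.1 + m.2.1 * η.2
  let A := m.2.2 * mξ - mξ * mη^2 / 2 - mξ^3 / 6
  let B := -(m.2.2 * mη) + mη * mξ^2 / 2 + mη^3 / 6
  (A * ξ.1 + B * η.1, A * ξ.2 + B * η.2, -(mξ^2) / 2 + mη^2 / 2)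

/-- Σ_{ξη}(m) = cos 2θ · Σ_{e₁e₂}(m) + sin 2θ · Σ_{ε₁ε₂}(m). -/
theorem sigmaRot_combination (θ : ℝ) (m : ℝ × ℝ × ℝ) :
    SigmaRot (Real.cos θ, Real.sin θ) (-Real.sin θ, Real.cos θ) m =
      Real.cos (2 * θ) • SigmaRot (1, 0) (0, 1) m +
        Real.sin (2 * θ) • SigmaRot (1 / Real.sqrt 2, 1 / Real.sqrt 2)
          (-(1 / Real.sqrt 2), 1 / Real.sqrt 2) m := by
  obtain ⟨a, b, c⟩ := m
  set C := Real.cos θ with hC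
  set S := Real.sin θ with hS
  set u : ℝ := 1 / Real.sqrt 2 with hu'
  have hpyth : S ^ 2 + C ^ 2 = 1 := Real.sin_sq_add_cos_sq θ
  have hu : u ^ 2 = 1 / 2 := by
    rw [hu', div_pow, one_pow, Real.sq_sqrt (by norm_num : (2:ℝ) ≥ 0)]
  have hc2 : Real.cos (2 * θ) = C ^ 2 - S ^ 2 := by
    rw [Real.cos_two_mul]; linarith
  have hsin2 : Real.sin (2 * θ) = 2 * S * C := by
    rw [Real.sin_two_mul]
  simp only [SigmaRot, Prod.mk.injEq, Prod.smul_mk, Prod.mk_add_mk, smul_eq_mul, hc2, hsin2]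
  refine ⟨?_, ?_, ?_⟩
  · linear_combination
      ((1/2)*S^2*a*b^2 + (1/6)*S^2*a^3 - (2/3)*C*S*b^3 - (1/2)*C^2*a*b^2 - (1/6)*C^2*a^3) * hpyth
      + (-4*C*S*b*c + (4/3)*C*S*b^3 + (8/3)*C*S*u^2*b^3) * hu
  · linear_combination
      (-(1/6)*S^2*b^3 - (1/2)*S^2*a^2*b - (2/3)*C*S*a^3 + (1/6)*C^2*b^3 + (1/2)*C^2*a^2*b) * hpyth
      + (-4*C*S*a*c + (4/3)*C*S*a^3 + (8/3)*C*S*u^2*a^3) * hu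
  · linear_combination (4*C*S*a*b) * hu
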